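/- Let ℓ ≥ 1 and 0 < a < b. The sets Ĝ_1(a,b), …, Ĝ_{2ℓ}(a,b) are pairwise disjoint: if i, j ∈ {1,…,2ℓ} with i ≠ j, then no pair (α,u) ∈ [0,∞) × S^{ℓ−1} belongs to both Ĝ_i(a,b) and Ĝ_j(a,b). -/

import Mathlib

open MeasureTheory

noncomputable section

/-- The hyperplane `H(α,u) = {x : ⟨x,u⟩ = α}` in `ℝ^ℓ`. -/
def Hplane (ℓ : ℕ) (α : ℝ) (u : EuclideanSpace ℝ (Fin ℓ)) : Set (EuclideanSpace ℝ (Fin ℓ)) :=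
  {x | (inner ℝ x u : ℝ) = α}

/-- The closed half-space `H⁻(α,u) = {x : ⟨x,u⟩ ≤ α}`. -/
def Hminus (ℓ : ℕ) (α : ℝ) (u : EuclideanSpace ℝ (Fin ℓ)) : Set (EuclideanSpace ℝ (Fin ℓ)) :=
  {x | (inner ℝ x u : ℝ) ≤ α}

/-- The closed half-space `H⁺(α,u) = {x : ⟨x,u⟩ ≥ α}`. -/
def Hplus (ℓ : ℕ) (α : ℝ) (u : EuclideanSpace ℝ (Fin ℓ)) : Set (EuclideanSpace ℝ (Fin ℓ)) :=
  {x | α ≤ (inner ℝ x u : ℝ)}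

/-- The hyperplane `H(α,u)` separates the sets `A` and `B`. -/
def Separates {ℓ : ℕ} (A B : Set (EuclideanSpace ℝ (Fin ℓ))) (α : ℝ)
    (u : EuclideanSpace ℝ (Fin ℓ)) : Prop :=
  (A ⊆ Hplus ℓ α u ∧ B ⊆ Hminus ℓ α u) ∨ (A ⊆ Hminus ℓ α u ∧ B ⊆ Hplus ℓ α u)

/-- The facet `f_i(c) = {x : x_i = c, |x_j| ≤ c for j ≠ i}` of the cube `[−c,c]^ℓ`. -/
def facetBase (ℓ : ℕ) (i : Fin ℓ) (c : ℝ) : Set (EuclideanSpace ℝ (Fin ℓ)) :=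
  {x | x i = c ∧ ∀ j, j ≠ i → |x j| ≤ c}

/-- The `2ℓ` facets of the cube `[−c,c]^ℓ`, indexed by `Fin ℓ ⊕ Fin ℓ`:
`Sum.inl i` is `f_i(c)` and `Sum.inr i` is `f_{i+ℓ}(c) = −f_i(c)`. -/
def facet (ℓ : ℕ) (i : Fin ℓ ⊕ Fin ℓ) (c : ℝ) : Set (EuclideanSpace ℝ (Fin ℓ)) :=
  match i with
  | Sum.inl i => facetBase ℓ i c
  | Sum.inr i => (fun x => -x) '' facetBase ℓ i c

/-- The unit sphere `S^{ℓ−1}` in `ℝ^ℓ`. -/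
abbrev unitSphere (ℓ : ℕ) : Set (EuclideanSpace ℝ (Fin ℓ)) :=
  Metric.sphere (0 : EuclideanSpace ℝ (Fin ℓ)) 1

/-- `Ĝ_i(a,b)`: the set of parameters `(α,u) ∈ [0,∞) × S^{ℓ−1}` such that `H(α,u)`
separates `f_i(a)` and `f_i(b)`. -/
def Ghat (ℓ : ℕ) (i : Fin ℓ ⊕ Fin ℓ) (a b : ℝ) : Set (ℝ × unitSphere ℓ) :=
  {p | 0 ≤ p.1 ∧ Separates (facet ℓ i a) (facet ℓ i b) p.1 (p.2 : EuclideanSpace ℝ (Fin ℓ))}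

/-- The hyperplane measure `μ = γ·(λ ⊗ θ)` on `ℝ × S^{ℓ−1}`. -/
def hypMeasure (ℓ : ℕ) (γ : ℝ) (θ : Measure (unitSphere ℓ)) : Measure (ℝ × unitSphere ℓ) :=
  ENNReal.ofReal γ • ((volume : Measure ℝ).prod θ)


/-
If `H(α,u)` separates `f_i(a)` from `f_i(b) ⊇ (b/a)·f_i(a)` with `α ≥ 0`, then either `u` is
orthogonal to `f_i(a)`, which spans `ℝ^ℓ`, or `α > 0` and `f_i(b)` lies in `H⁺(α,u)`. So a
common `(α,u) ∈ Ĝ_i ∩ Ĝ_j` would put both `f_i(b)` and `f_j(b)` into the open half-space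
`⟨x,u⟩ > 0`. For `i ≠ j` the facets `f_i(b)` and `−f_j(b)` meet, at some `x`, and then
`⟨x,u⟩ > 0` and `⟨−x,u⟩ > 0` cannot both hold.
-/

lemma Separates.inner_eq_zero_or_pos_subset_Hplus {ℓ : ℕ}
    {A B : Set (EuclideanSpace ℝ (Fin ℓ))} {t α : ℝ} {u : EuclideanSpace ℝ (Fin ℓ)}
    (ht : 1 < t) (hα : 0 ≤ α) (hAB : ∀ x ∈ A, t • x ∈ B) (hsep : Separates A B α u) :
    (∀ x ∈ A, inner ℝ x u = 0) ∨ (0 < α ∧ B ⊆ Hplus ℓ α u) := by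
  rcases hsep with ⟨hA, hB⟩ | ⟨hA, hB⟩
  · refine Or.inl fun x hx => ?_
    have hx_plus : α ≤ inner ℝ x u := hA hx
    have htx_minus : inner ℝ (t • x) u ≤ α := hB (hAB x hx)
    rw [real_inner_smul_left] at htx_minus
    nlinarith
  · rcases hα.lt_or_eq with hα_pos | rfl
    · exact Or.inr ⟨hα_pos, hB⟩
    refine Or.inl fun x hx => ?_
    have hx_minus : inner ℝ x u ≤ 0 := hA hx
    have htx_plus : 0 ≤ inner ℝ (t • x) u := hB (hAB x hx)
    rw [real_inner_smul_left] at htx_plus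
    nlinarith

def facetAxis {ℓ : ℕ} : Fin ℓ ⊕ Fin ℓ → Fin ℓ := Sum.elim id id

def facetSign {ℓ : ℕ} : Fin ℓ ⊕ Fin ℓ → ℝ := Sum.elim (fun _ => 1) (fun _ => -1)

lemma abs_facetSign {ℓ : ℕ} (i : Fin ℓ ⊕ Fin ℓ) : |facetSign i| = 1 := by
  cases i <;> simp [facetSign]

lemma facetSign_eq_neg_of_facetAxis_eq {ℓ : ℕ} {i j : Fin ℓ ⊕ Fin ℓ} (hij : i ≠ j)
    (h : facetAxis i = facetAxis j) : facetSign j = -facetSign i := by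
  rcases i with k | k <;> rcases j with m | m <;> simp_all [facetAxis, facetSign]

lemma mem_facet_iff {ℓ : ℕ} {i : Fin ℓ ⊕ Fin ℓ} {c : ℝ} {x : EuclideanSpace ℝ (Fin ℓ)} :
    x ∈ facet ℓ i c ↔
      x (facetAxis i) = facetSign i * c ∧ ∀ m, m ≠ facetAxis i → |x m| ≤ c := by
  rcases i with k | k
  · simp [facet, facetBase, facetAxis, facetSign]
  · change x ∈ Neg.neg '' facetBase ℓ k c ↔ _
    rw [Set.image_neg_eq_neg, Set.mem_neg]
    simp [facetBase, facetAxis, facetSign, neg_eq_iff_eq_neg]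

lemma smul_mem_facet {ℓ : ℕ} {i : Fin ℓ ⊕ Fin ℓ} {t c : ℝ} (ht : 0 ≤ t)
    {x : EuclideanSpace ℝ (Fin ℓ)} (hx : x ∈ facet ℓ i c) : t • x ∈ facet ℓ i (t * c) := by
  rw [mem_facet_iff] at hx ⊢
  refine ⟨?_, fun m hm => ?_⟩
  · simp only [PiLp.smul_apply, smul_eq_mul, hx.1]
    ring
  · simpa only [PiLp.smul_apply, smul_eq_mul, abs_mul, abs_of_nonneg ht]
      using mul_le_mul_of_nonneg_left (hx.2 m hm) ht

lemma eq_zero_of_forall_mem_facet_inner_eq_zero {ℓ : ℕ} {i : Fin ℓ ⊕ Fin ℓ} {c : ℝ}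
    (hc : 0 < c) {u : EuclideanSpace ℝ (Fin ℓ)}
    (h : ∀ x ∈ facet ℓ i c, inner ℝ x u = 0) : u = 0 := by
  set center := EuclideanSpace.single (facetAxis i) (facetSign i * c)
  have hcenter : center ∈ facet ℓ i c := by
    rw [mem_facet_iff]
    refine ⟨by simp [center], fun m hm => ?_⟩
    simp [center, hm, hc.le]
  have haxis : u (facetAxis i) = 0 := by
    have hsign : facetSign i ≠ 0 := by simp [← abs_pos, abs_facetSign]
    simpa [center, EuclideanSpace.inner_single_left, hsign, hc.ne'] using h _ hcenter
  ext m
  by_cases hm : m = facetAxis i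
  · rw [hm, haxis]; rfl
  have hshift : center + EuclideanSpace.single m c ∈ facet ℓ i c := by
    rw [mem_facet_iff]
    refine ⟨by simp [center, Ne.symm hm], fun m' hm' => ?_⟩
    by_cases hm'm : m' = m <;> simp [center, hm', hm'm, hm, hc.le, abs_of_pos hc]
  simpa [inner_add_left, h _ hcenter, EuclideanSpace.inner_single_left, hc.ne']
    using h _ hshift

/-- Witness: `x_k = s_i c` at `k = facetAxis i`, `x_m = -s_j c` at `m = facetAxis j ≠ k`, `0`
elsewhere. When the axes coincide, `s_j = -s_i` puts `-x` into `f_j(c)`. -/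
lemma exists_mem_facet_neg_mem_facet {ℓ : ℕ} {i j : Fin ℓ ⊕ Fin ℓ} (hij : i ≠ j) {c : ℝ}
    (hc : 0 ≤ c) : ∃ x, x ∈ facet ℓ i c ∧ -x ∈ facet ℓ j c := by
  have hsi := abs_facetSign i
  have hsj := abs_facetSign j
  refine ⟨WithLp.toLp 2 fun m =>
    if m = facetAxis i then facetSign i * c
    else if m = facetAxis j then -(facetSign j * c) else 0, ?_, ?_⟩
  · rw [mem_facet_iff]
    refine ⟨by simp, fun m hm => ?_⟩
    simp only [if_neg hm]
    split_ifs <;> simp [abs_mul, hsj, abs_of_nonneg hc, hc]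
  · rw [mem_facet_iff]
    by_cases hax : facetAxis j = facetAxis i
    · refine ⟨?_, fun m hm => ?_⟩
      · simp [hax, facetSign_eq_neg_of_facetAxis_eq hij hax.symm]
      · simp [← hax, hm, hc]
    · refine ⟨by simp [hax], fun m hm => ?_⟩
      simp only [PiLp.neg_apply, if_neg hm, abs_neg]
      split_ifs <;> simp [abs_mul, hsi, abs_of_nonneg hc, hc]

lemma pos_and_facet_subset_Hplus_of_separates {ℓ : ℕ} {i : Fin ℓ ⊕ Fin ℓ}
    {a b α : ℝ} {u : EuclideanSpace ℝ (Fin ℓ)} (ha : 0 < a) (hab : a < b) (hα : 0 ≤ α)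
    (hu : u ≠ 0) (hsep : Separates (facet ℓ i a) (facet ℓ i b) α u) :
    0 < α ∧ facet ℓ i b ⊆ Hplus ℓ α u := by
  have hscale : ∀ x ∈ facet ℓ i a, (b / a) • x ∈ facet ℓ i b := fun x hx => by
    simpa [div_mul_cancel₀ b ha.ne'] using smul_mem_facet (div_pos (ha.trans hab) ha).le hx
  exact (hsep.inner_eq_zero_or_pos_subset_Hplus ((one_lt_div ha).2 hab) hα hscale).resolve_left
    fun horth => hu (eq_zero_of_forall_mem_facet_inner_eq_zero ha horth)

theorem stmt3_general (ℓ : ℕ) (a b : ℝ) (ha : 0 < a) (hab : a < b)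
    (i j : Fin ℓ ⊕ Fin ℓ) (hij : i ≠ j) :
    ∀ p : ℝ × unitSphere ℓ, ¬(p ∈ Ghat ℓ i a b ∧ p ∈ Ghat ℓ j a b) := by
  rintro ⟨α, u⟩ ⟨⟨hα, hsep_i⟩, -, hsep_j⟩
  have hu : (u : EuclideanSpace ℝ (Fin ℓ)) ≠ 0 := ne_zero_of_mem_unit_sphere u
  obtain ⟨hα_pos, hi_plus⟩ := pos_and_facet_subset_Hplus_of_separates ha hab hα hu hsep_i
  obtain ⟨-, hj_plus⟩ := pos_and_facet_subset_Hplus_of_separates ha hab hα hu hsep_j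
  obtain ⟨x, hx_i, hnegx_j⟩ := exists_mem_facet_neg_mem_facet hij (ha.trans hab).le
  have hx : α ≤ inner ℝ x (u : EuclideanSpace ℝ (Fin ℓ)) := hi_plus hx_i
  have hnegx : α ≤ inner ℝ (-x) (u : EuclideanSpace ℝ (Fin ℓ)) := hj_plus hnegx_j
  rw [inner_neg_left] at hnegx
  linarith

/-- The sets `Ĝ_1(a,b), …, Ĝ_{2ℓ}(a,b)` are pairwise disjoint. -/
theorem stmt3 (ℓ : ℕ) (hℓ : 1 ≤ ℓ) (a b : ℝ) (ha : 0 < a) (hab : a < b)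
    (i j : Fin ℓ ⊕ Fin ℓ) (hij : i ≠ j) :
    ∀ p : ℝ × unitSphere ℓ, ¬(p ∈ Ghat ℓ i a b ∧ p ∈ Ghat ℓ j a b) :=
  stmt3_general ℓ a b ha hab i j hij

end
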